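/- Let μ₁, μ₂, μ₃ be complex numbers with μ₁ + μ₂ + μ₃ = 0, Re(μ₂ - μ₃) > 0, and Re(μ₁ - μ₃) > 0, and let n₂ be real. Then ∫_{ℝ²} ( √(1+u₂²) / (1+u₂²+u₃²) )^{1-μ₃} · ( √(1+u₂²+u₃²) / (1+u₂²) )^{1+μ₁} · e(-n₂u₂) du₂du₃ = [ 2^{1-(μ₂-μ₃)} π Γ(μ₂-μ₃) / Γ((1+μ₂-μ₃)/2)² ] · ∫_ℝ (1+x²)^{-(1+μ₁-μ₃)/2} e(-n₂x) dx, and both integrals converge absolutely. -/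

import Mathlib

/-!
Writing `a = 1 + u₂²`, the integrand is `a ^ P · (a + u₃²) ^ Q · e(-n₂u₂)` with
`P = (1 - μ₃)/2 - (1 + μ₁)` and, using `μ₁ + μ₂ + μ₃ = 0`, `Q = -(1 + μ₂ - μ₃)/2`.
The substitution `u₃ = √a · t` gives `∫ (a + u₃²) ^ Q du₃ = a ^ (Q + 1/2) ∫ (1 + t²) ^ Q dt`,
and `P + Q + 1/2 = -(1 + μ₁ - μ₃)/2`, so Fubini splits the double integral into the product
of `𝒲₀(0, μ₂ - μ₃)` and `𝒲₀(n₂, μ₁ - μ₃)`. The constant comes from the substitution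
`t = x² / (1 + x²)`, which turns `∫ (1 + x²) ^ (-(1 + ν)/2) dx` into `B(1/2, ν/2)`, and
Legendre's duplication formula.
-/

open MeasureTheory Set

lemma integrable_one_add_sq_rpow {q : ℝ} (hq : q < -(1 / 2)) :
    Integrable fun x : ℝ => (1 + x ^ 2) ^ q := by
  have h := integrable_rpow_neg_one_add_norm_sq (E := ℝ) (μ := volume) (r := -2 * q)
    (by rw [Module.finrank_self]; push_cast; linarith)
  simpa [mul_div_cancel_left₀] using h

lemma Complex.ofReal_cpow_eq_exp {r : ℝ} (hr : 0 < r) (w : ℂ) :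
    (r : ℂ) ^ w = Complex.exp (Real.log r * w) := by
  rw [Complex.cpow_def_of_ne_zero (Complex.ofReal_ne_zero.2 hr.ne'), Complex.ofReal_log hr.le]

lemma integrable_one_add_sq_cpow {w : ℂ} (hw : w.re < -(1 / 2)) :
    Integrable fun x : ℝ => ((1 + x ^ 2 : ℝ) : ℂ) ^ w :=
  (integrable_one_add_sq_rpow hw).mono' (by fun_prop : Measurable _).aestronglyMeasurable <|
    .of_forall fun x => by
    rw [Complex.norm_cpow_eq_rpow_re_of_pos (by positivity)]

lemma integral_eq_two_smul_integral_Ioi_of_even {E : Type*} [NormedAddCommGroup E]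
    [NormedSpace ℝ E] {f : ℝ → E} (heven : ∀ x, f (-x) = f x) (hf : Integrable f) :
    ∫ x, f x = (2 : ℝ) • ∫ x in Ioi 0, f x := by
  have hIic : ∫ x in Iic 0, f x = ∫ x in Ioi 0, f x := by
    simpa [heven] using (integral_comp_neg_Ioi 0 f).symm
  rw [← intervalIntegral.integral_Iic_add_Ioi hf.integrableOn hf.integrableOn, hIic, two_smul]

lemma add_sqrt_mul_sq {a : ℝ} (ha : 0 ≤ a) (t : ℝ) : a + (√a * t) ^ 2 = a * (1 + t ^ 2) := by
  rw [mul_pow, Real.sq_sqrt ha]; ring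

lemma integral_comp_add_sq {E : Type*} [NormedAddCommGroup E] [NormedSpace ℝ E]
    (φ : ℝ → E) {a : ℝ} (ha : 0 < a) :
    ∫ y, φ (a + y ^ 2) = √a • ∫ t, φ (a * (1 + t ^ 2)) := by
  have h := Measure.integral_comp_mul_left (fun y => φ (a + y ^ 2)) √a
  simp only [add_sqrt_mul_sq ha.le] at h
  rw [h, smul_smul, abs_of_pos (by positivity), mul_inv_cancel₀ (by positivity), one_smul]

lemma integrable_comp_add_sq_iff {E : Type*} [NormedAddCommGroup E] (φ : ℝ → E) {a : ℝ}
    (ha : 0 < a) :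
    Integrable (fun y => φ (a + y ^ 2)) ↔ Integrable fun t => φ (a * (1 + t ^ 2)) := by
  have h := integrable_comp_mul_left_iff (fun y => φ (a + y ^ 2)) (Real.sqrt_pos.2 ha).ne'
  simp only [add_sqrt_mul_sq ha.le] at h
  exact h.symm

lemma integrable_add_sq_rpow {a : ℝ} (ha : 0 < a) {q : ℝ} (hq : q < -(1 / 2)) :
    Integrable fun y : ℝ => (a + y ^ 2) ^ q := by
  rw [integrable_comp_add_sq_iff (· ^ q) ha]
  simp only [fun t : ℝ => Real.mul_rpow (z := q) ha.le (by positivity : (0 : ℝ) ≤ 1 + t ^ 2)]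
  exact (integrable_one_add_sq_rpow hq).const_mul _

lemma integral_add_sq_rpow {a : ℝ} (ha : 0 < a) (q : ℝ) :
    ∫ y : ℝ, (a + y ^ 2) ^ q = a ^ (q + 1 / 2) * ∫ t : ℝ, (1 + t ^ 2) ^ q := by
  rw [integral_comp_add_sq (· ^ q) ha]
  simp only [fun t : ℝ => Real.mul_rpow (z := q) ha.le (by positivity : (0 : ℝ) ≤ 1 + t ^ 2)]
  rw [integral_const_mul, smul_eq_mul, ← mul_assoc, Real.sqrt_eq_rpow, ← Real.rpow_add ha,
    add_comm]

lemma integral_add_sq_cpow {a : ℝ} (ha : 0 < a) (w : ℂ) :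
    ∫ y : ℝ, ((a + y ^ 2 : ℝ) : ℂ) ^ w
      = (a : ℂ) ^ (w + 1 / 2) * ∫ t : ℝ, ((1 + t ^ 2 : ℝ) : ℂ) ^ w := by
  rw [integral_comp_add_sq (fun r : ℝ => (r : ℂ) ^ w) ha]
  simp only [Complex.ofReal_mul,
    fun t : ℝ => Complex.mul_cpow_ofReal_nonneg ha.le (by positivity : (0 : ℝ) ≤ 1 + t ^ 2) w]
  rw [integral_const_mul, Complex.real_smul, ← mul_assoc, Real.sqrt_eq_rpow,
    Complex.ofReal_cpow ha.le, ← Complex.cpow_add _ _ (by exact_mod_cast ha.ne'), add_comm]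
  push_cast; ring_nf

lemma image_sq_div_one_add_sq_Ioi : (fun x : ℝ => x ^ 2 / (1 + x ^ 2)) '' Ioi 0 = Ioo 0 1 := by
  ext t
  constructor
  · rintro ⟨x, hx, rfl⟩
    have hx : 0 < x := hx
    exact ⟨by positivity, (div_lt_one (by positivity)).2 (by linarith)⟩
  · rintro ⟨ht0, ht1⟩
    have h1t : 0 < 1 - t := by linarith
    refine ⟨√(t / (1 - t)), Real.sqrt_pos.2 (div_pos ht0 h1t), ?_⟩
    simp only
    rw [Real.sq_sqrt (div_pos ht0 h1t).le]
    field_simp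
    ring

lemma strictMonoOn_sq_div_one_add_sq : StrictMonoOn (fun x : ℝ => x ^ 2 / (1 + x ^ 2)) (Ioi 0) := by
  intro x hx y hy hxy
  have hx : 0 < x := hx
  simp only
  rw [div_lt_div_iff₀ (by positivity) (by positivity)]
  nlinarith [mul_pos hx (hx.trans hxy)]

lemma hasDerivAt_sq_div_one_add_sq (x : ℝ) :
    HasDerivAt (fun x : ℝ => x ^ 2 / (1 + x ^ 2)) (2 * x / (1 + x ^ 2) ^ 2) x := by
  refine ((hasDerivAt_pow 2 x).fun_div ((hasDerivAt_pow 2 x).const_add 1)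
    (by positivity)).congr_deriv ?_
  push_cast
  ring

lemma abs_deriv_smul_betaIntegrand (ν : ℂ) {x : ℝ} (hx : 0 < x) :
    |2 * x / (1 + x ^ 2) ^ 2| • ((((x ^ 2 / (1 + x ^ 2) : ℝ)) : ℂ) ^ ((1 : ℂ) / 2 - 1) *
        (1 - ((x ^ 2 / (1 + x ^ 2) : ℝ) : ℂ)) ^ (ν / 2 - 1))
      = 2 * ((1 + x ^ 2 : ℝ) : ℂ) ^ (-(1 + ν) / 2) := by
  have ha : 0 < 1 + x ^ 2 := by positivity
  have hsub : 1 - ((x ^ 2 / (1 + x ^ 2) : ℝ) : ℂ) = (((1 + x ^ 2)⁻¹ : ℝ) : ℂ) := by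
    have : (1 + (x : ℂ) ^ 2) ≠ 0 := by exact_mod_cast ha.ne'
    push_cast
    field_simp
    ring
  have hlog : Real.log (x ^ 2 / (1 + x ^ 2)) = 2 * Real.log x - Real.log (1 + x ^ 2) := by
    rw [Real.log_div (by positivity) ha.ne', Real.log_pow]; push_cast; ring
  have hjac : |2 * x / (1 + x ^ 2) ^ 2|
      = 2 * Real.exp (Real.log x - 2 * Real.log (1 + x ^ 2)) := by
    rw [abs_of_pos (by positivity), Real.exp_sub, Real.exp_log hx, ← Real.log_rpow ha,
      Real.exp_log (by positivity)]
    norm_cast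
    ring
  rw [hsub, Complex.ofReal_cpow_eq_exp (by positivity), Complex.ofReal_cpow_eq_exp (by positivity),
    Complex.ofReal_cpow_eq_exp ha, hlog, Real.log_inv, hjac, Complex.real_smul]
  push_cast
  rw [mul_assoc, ← Complex.exp_add, ← Complex.exp_add]
  ring_nf

lemma two_mul_integral_Ioi_one_add_sq_cpow (ν : ℂ) :
    2 * ∫ x in Ioi (0 : ℝ), ((1 + x ^ 2 : ℝ) : ℂ) ^ (-(1 + ν) / 2)
      = Complex.betaIntegral (1 / 2) (ν / 2) := by
  rw [Complex.betaIntegral, intervalIntegral.integral_of_le zero_le_one,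
    integral_Ioc_eq_integral_Ioo, ← image_sq_div_one_add_sq_Ioi,
    integral_image_eq_integral_abs_deriv_smul measurableSet_Ioi
      (fun x _ => (hasDerivAt_sq_div_one_add_sq x).hasDerivWithinAt)
      strictMonoOn_sq_div_one_add_sq.injOn,
    ← integral_const_mul]
  exact setIntegral_congr_fun measurableSet_Ioi fun x hx =>
    (abs_deriv_smul_betaIntegrand ν hx).symm

lemma betaIntegral_one_half {ν : ℂ} (hν : 0 < ν.re) :
    Complex.betaIntegral (1 / 2) (ν / 2)
      = 2 ^ (1 - ν) * Real.pi * Complex.Gamma ν / Complex.Gamma ((1 + ν) / 2) ^ 2 := by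
  have hν2 : 0 < (ν / 2).re := by simpa using hν
  have hΓ : Complex.Gamma ((1 + ν) / 2) ≠ 0 :=
    Complex.Gamma_ne_zero_of_re_pos (by simpa using by linarith)
  have hdup := Complex.Gamma_mul_Gamma_add_half (ν / 2)
  have hhalf : Complex.Gamma (1 / 2) = (√Real.pi : ℂ) := by
    rw [← Real.Gamma_one_half_eq, ← Complex.Gamma_ofReal]; norm_num
  rw [show ν / 2 + 1 / 2 = (1 + ν) / 2 by ring, show 2 * (ν / 2) = ν by ring] at hdup
  rw [Complex.betaIntegral_eq_Gamma_mul_div _ _ (by norm_num) hν2, hhalf,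
    show 1 / 2 + ν / 2 = (1 + ν) / 2 by ring, div_eq_div_iff hΓ (pow_ne_zero 2 hΓ)]
  have hπ : (√Real.pi : ℂ) * √Real.pi = Real.pi := by
    rw [← Complex.ofReal_mul, Real.mul_self_sqrt Real.pi_pos.le]
  linear_combination (√Real.pi * Complex.Gamma ((1 + ν) / 2)) * hdup
    + Complex.Gamma ((1 + ν) / 2) * Complex.Gamma ν * 2 ^ (1 - ν) * hπ

lemma integral_one_add_sq_cpow {ν : ℂ} (hν : 0 < ν.re) :
    ∫ x : ℝ, ((1 + x ^ 2 : ℝ) : ℂ) ^ (-(1 + ν) / 2)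
      = 2 ^ (1 - ν) * Real.pi * Complex.Gamma ν / Complex.Gamma ((1 + ν) / 2) ^ 2 := by
  have hre : (-(1 + ν) / 2).re < -(1 / 2) := by
    simp only [Complex.neg_re, Complex.div_ofNat_re, Complex.add_re, Complex.one_re]; linarith
  rw [integral_eq_two_smul_integral_Ioi_of_even (fun x => by rw [neg_sq])
      (integrable_one_add_sq_cpow hre), Complex.real_smul, Complex.ofReal_ofNat,
    ← betaIntegral_one_half hν, ← two_mul_integral_Ioi_one_add_sq_cpow]

lemma integrable_one_add_sq_rpow_mul_add_sq_rpow {p q : ℝ} (hq : q < -(1 / 2))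
    (hpq : p + q < -1) :
    Integrable fun u : ℝ × ℝ => (1 + u.1 ^ 2) ^ p * (1 + u.1 ^ 2 + u.2 ^ 2) ^ q := by
  rw [Measure.volume_eq_prod, integrable_prod_iff (by fun_prop : Measurable _).aestronglyMeasurable]
  refine ⟨.of_forall fun x =>
    (integrable_add_sq_rpow (a := 1 + x ^ 2) (by positivity) hq).const_mul ((1 + x ^ 2) ^ p), ?_⟩
  have hfiber : ∀ x : ℝ, ∫ y, ‖(1 + x ^ 2) ^ p * (1 + x ^ 2 + y ^ 2) ^ q‖
      = (1 + x ^ 2) ^ (p + q + 1 / 2) * ∫ t : ℝ, (1 + t ^ 2) ^ q := fun x => by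
    have ha : 0 < 1 + x ^ 2 := by positivity
    simp only [fun y : ℝ => Real.norm_of_nonneg
      (by positivity : 0 ≤ (1 + x ^ 2) ^ p * (1 + x ^ 2 + y ^ 2) ^ q)]
    rw [integral_const_mul, integral_add_sq_rpow ha, ← mul_assoc, ← Real.rpow_add ha, add_assoc]
  simp only [hfiber]
  exact (integrable_one_add_sq_rpow (by linarith)).mul_const _

lemma integrable_one_add_sq_cpow_mul_add_sq_cpow {p q : ℂ} (hq : q.re < -(1 / 2))
    (hpq : p.re + q.re < -1) :
    Integrable fun u : ℝ × ℝ =>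
      ((1 + u.1 ^ 2 : ℝ) : ℂ) ^ p * ((1 + u.1 ^ 2 + u.2 ^ 2 : ℝ) : ℂ) ^ q :=
  (integrable_one_add_sq_rpow_mul_add_sq_rpow hq hpq).mono'
    (by fun_prop : Measurable _).aestronglyMeasurable <| .of_forall fun u => by
      rw [norm_mul, Complex.norm_cpow_eq_rpow_re_of_pos (by positivity),
        Complex.norm_cpow_eq_rpow_re_of_pos (by positivity)]

lemma integral_one_add_sq_cpow_mul_add_sq_cpow_mul {p q : ℂ} {χ : ℝ → ℂ}
    (hint : Integrable fun u : ℝ × ℝ =>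
      ((1 + u.1 ^ 2 : ℝ) : ℂ) ^ p * ((1 + u.1 ^ 2 + u.2 ^ 2 : ℝ) : ℂ) ^ q * χ u.1) :
    ∫ u : ℝ × ℝ, ((1 + u.1 ^ 2 : ℝ) : ℂ) ^ p * ((1 + u.1 ^ 2 + u.2 ^ 2 : ℝ) : ℂ) ^ q * χ u.1
      = (∫ t : ℝ, ((1 + t ^ 2 : ℝ) : ℂ) ^ q) *
          ∫ x : ℝ, ((1 + x ^ 2 : ℝ) : ℂ) ^ (p + q + 1 / 2) * χ x := by
  rw [Measure.volume_eq_prod, integral_prod _ hint, ← integral_const_mul]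
  refine integral_congr_ae (.of_forall fun x => ?_)
  have ha : 0 < 1 + x ^ 2 := by positivity
  dsimp only
  rw [integral_mul_const, integral_const_mul, integral_add_sq_cpow ha, add_assoc p,
    Complex.cpow_add p _ (by exact_mod_cast ha.ne')]
  ring

lemma sqrt_div_cpow_mul_sqrt_div_cpow {a b : ℝ} (ha : 0 < a) (hb : 0 < b) (s t : ℂ) :
    ((√a / b : ℝ) : ℂ) ^ s * ((√b / a : ℝ) : ℂ) ^ t
      = (a : ℂ) ^ (s / 2 - t) * (b : ℂ) ^ (t / 2 - s) := by
  simp only [Complex.ofReal_cpow_eq_exp, ha, hb, div_pos, Real.sqrt_pos]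
  rw [Real.log_div (by positivity) hb.ne', Real.log_div (by positivity) ha.ne',
    Real.log_sqrt ha.le, Real.log_sqrt hb.le, ← Complex.exp_add, ← Complex.exp_add]
  push_cast
  ring_nf

lemma norm_exp_two_pi_I_mul (t : ℝ) :
    ‖Complex.exp (2 * (Real.pi : ℂ) * Complex.I * (t : ℂ))‖ = 1 := by
  simp [Complex.norm_exp]

/-- The spherical degenerate Whittaker function at the Weyl element `w₄` factors as
`𝒲₀(0,μ₂−μ₃)·𝒲₀(n₂,μ₁−μ₃)`; both integrals converge absolutely. Here
`u = (u₂, u₃)` and `e(t) = exp(2πit)`. -/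
theorem stmt_16 (μ₁ μ₂ μ₃ : ℂ) (hsum : μ₁ + μ₂ + μ₃ = 0)
    (h23 : 0 < (μ₂ - μ₃).re) (h13 : 0 < (μ₁ - μ₃).re) (n₂ : ℝ) :
    let f : ℝ × ℝ → ℂ := fun u =>
      ((Real.sqrt (1 + u.1 ^ 2) / (1 + u.1 ^ 2 + u.2 ^ 2) : ℝ) : ℂ) ^ (1 - μ₃) *
        ((Real.sqrt (1 + u.1 ^ 2 + u.2 ^ 2) / (1 + u.1 ^ 2) : ℝ) : ℂ) ^ (1 + μ₁) *
        Complex.exp (2 * (Real.pi : ℂ) * Complex.I * ((-n₂ * u.1 : ℝ) : ℂ))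
    let g : ℝ → ℂ := fun x =>
      ((1 + x ^ 2 : ℝ) : ℂ) ^ (-(1 + μ₁ - μ₃) / 2) *
        Complex.exp (2 * (Real.pi : ℂ) * Complex.I * ((-n₂ * x : ℝ) : ℂ))
    Integrable f ∧ Integrable g ∧
      (∫ u : ℝ × ℝ, f u)
        = ((2 : ℂ) ^ (1 - (μ₂ - μ₃)) * (Real.pi : ℂ) * Complex.Gamma (μ₂ - μ₃) /
            Complex.Gamma ((1 + μ₂ - μ₃) / 2) ^ 2) * ∫ x : ℝ, g x := by
  intro f g
  set P : ℂ := (1 - μ₃) / 2 - (1 + μ₁)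
  set Q : ℂ := -(1 + (μ₂ - μ₃)) / 2
  set χ : ℝ → ℂ := fun x => Complex.exp (2 * (Real.pi : ℂ) * Complex.I * ((-n₂ * x : ℝ) : ℂ))
  have hf : f = fun u => ((1 + u.1 ^ 2 : ℝ) : ℂ) ^ P * ((1 + u.1 ^ 2 + u.2 ^ 2 : ℝ) : ℂ) ^ Q
      * χ u.1 := funext fun u => by
    rw [show Q = (1 + μ₁) / 2 - (1 - μ₃) by linear_combination -hsum / 2,
      ← sqrt_div_cpow_mul_sqrt_div_cpow (by positivity) (by positivity)]
  have hPQ : P + Q + 1 / 2 = -(1 + μ₁ - μ₃) / 2 := by linear_combination -hsum / 2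
  have hχ : ∀ x, ‖χ x‖ ≤ 1 := fun x => (norm_exp_two_pi_I_mul _).le
  have hsum_re : μ₁.re + μ₂.re + μ₃.re = 0 := by simpa using congrArg Complex.re hsum
  have hre₂₃ : μ₃.re < μ₂.re := by simpa using h23
  have hre₁₃ : μ₃.re < μ₁.re := by simpa using h13
  have hQ_re : Q.re < -(1 / 2) := by
    simp only [Q, Complex.add_re, Complex.sub_re, Complex.neg_re, Complex.div_ofNat_re,
      Complex.one_re]; linarith
  have hPQ_re : P.re + Q.re < -1 := by
    simp only [P, Q, Complex.add_re, Complex.sub_re, Complex.neg_re, Complex.div_ofNat_re,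
      Complex.one_re]; linarith
  have hg_re : (-(1 + μ₁ - μ₃) / 2).re < -(1 / 2) := by
    simp only [Complex.add_re, Complex.sub_re, Complex.neg_re, Complex.div_ofNat_re,
      Complex.one_re]; linarith
  have hIf : Integrable f := hf ▸ (integrable_one_add_sq_cpow_mul_add_sq_cpow hQ_re hPQ_re).mul_bdd
    (by fun_prop : Measurable _).aestronglyMeasurable (.of_forall fun u => hχ u.1)
  have hIg : Integrable g := (integrable_one_add_sq_cpow hg_re).mul_bdd
    (by fun_prop : Measurable χ).aestronglyMeasurable (.of_forall hχ)
  refine ⟨hIf, hIg, ?_⟩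
  rw [hf, integral_one_add_sq_cpow_mul_add_sq_cpow_mul (hf ▸ hIf), hPQ,
    integral_one_add_sq_cpow h23, ← add_sub_assoc]
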